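/- arXiv:1304.2001 — 3 statements merged into one kernel-verified Lean document; each statement's English description precedes it below -/
import Mathlib

section
/- Assume condition (A3). Then for every λ > 0, the equality ∫₀^∞ F(v_s(λ)) ds = ∫₀^{λ} F(r)/ψ(r) dr holds, where both sides take values in [0, ∞]. In particular, condition (A2) holds if and only if ∫₀^∞ F(v_s(λ)) ds < ∞ for every λ > 0. -/
open MeasureTheory Real Set Filter

/-- The (sub)-critical branching mechanism
`ψ(z) = b z + σ z² + ∫₀^∞ (e^{−z u} − 1 + z u) m(du)`. -/
noncomputable def psi (b σ : ℝ) (m : Measure ℝ) (z : ℝ) : ℝ :=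
  b * z + σ * z ^ 2 + ∫ u in Ioi (0 : ℝ), (Real.exp (-(z * u)) - 1 + z * u) ∂m

/-- Condition (A3): either `σ > 0` or `∫₀^1 u m(du) = ∞`. -/
def condA3 (σ : ℝ) (m : Measure ℝ) : Prop :=
  0 < σ ∨ ∫⁻ u in Ioc (0 : ℝ) 1, ENNReal.ofReal u ∂m = ⊤

/-- `v t λ ∈ (0, λ]` is the unique solution of `∫_{v_t(λ)}^{λ} dz/ψ(z) = t`
(the cumulant semigroup). -/
def IsCumulant (b σ : ℝ) (m : Measure ℝ) (v : ℝ → ℝ → ℝ) : Prop :=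
  ∀ lam > (0 : ℝ), ∀ t ≥ (0 : ℝ),
    v t lam ∈ Ioc 0 lam ∧ ∫ z in (v t lam)..lam, (psi b σ m z)⁻¹ = t

/-- The immigration mechanism `F(z) = β z + ∫₀^∞ (1 − e^{−z u}) n(du)`. -/
noncomputable def Fim (β : ℝ) (n : Measure ℝ) (z : ℝ) : ℝ :=
  β * z + ∫ u in Ioi (0 : ℝ), (1 - Real.exp (-(z * u))) ∂n

open scoped ENNReal

/-!
Write `T(r) = ∫_r^λ dz/ψ(z)`. Under (A3) `ψ` is continuous and positive on `(0, ∞)`, so `T` is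
a strictly decreasing `C¹` bijection of `(0, λ)` onto `(0, ∞)` with `T' = -1/ψ`, and
`s ↦ v_s(λ)` is its inverse. The substitution `s = T(r)` turns `∫₀^∞ F(v_s(λ)) ds` into
`∫₀^λ F(r)/ψ(r) dr`. For the finiteness statement, `F/ψ` is continuous on `(0, ∞)`, so only the
singularity at `0` matters, and it does not depend on `λ`.
-/
lemma exp_neg_sub_one_add_nonneg (x : ℝ) : 0 ≤ exp (-x) - 1 + x := by
  linarith [add_one_le_exp (-x)]

lemma exp_neg_sub_one_add_le_min {x : ℝ} (hx : 0 ≤ x) : exp (-x) - 1 + x ≤ min x (x ^ 2) := by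
  have h_exp_le : exp (-x) ≤ 1 := exp_le_one_iff.mpr (by linarith)
  refine le_min (by linarith) ?_
  rcases le_or_gt x 1 with hx1 | hx1
  · have := abs_le.mp (abs_exp_sub_one_sub_id_le (x := -x) (by rwa [abs_neg, abs_of_nonneg hx]))
    nlinarith [this.2]
  · nlinarith

lemma monotoneOn_exp_neg_sub_one_add : MonotoneOn (fun x => exp (-x) - 1 + x) (Ici 0) := by
  intro a ha b _ hab
  have h_split : exp (-b) = exp (-a) * exp (-(b - a)) := by rw [← exp_add]; ring_nf
  have h_tangent := add_one_le_exp (-(b - a))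
  have h_exp_le : exp (-a) ≤ 1 := exp_le_one_iff.mpr (by simpa using ha)
  nlinarith [exp_pos (-a)]

lemma one_sub_exp_neg_nonneg {x : ℝ} (hx : 0 ≤ x) : 0 ≤ 1 - exp (-x) :=
  sub_nonneg.mpr (exp_le_one_iff.mpr (by linarith))

lemma one_sub_exp_neg_le_min (x : ℝ) : 1 - exp (-x) ≤ min 1 x :=
  le_min (by linarith [exp_pos (-x)]) (by linarith [add_one_le_exp (-x)])

lemma monotone_one_sub_exp_neg : Monotone fun x : ℝ => 1 - exp (-x) :=
  fun _ _ hab => by simp only; linarith [exp_le_exp.mpr (neg_le_neg hab)]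

lemma min_mul_sq_le_max_mul_min (z : ℝ) {u : ℝ} (hu : 0 ≤ u) :
    min (z * u) ((z * u) ^ 2) ≤ max z (z ^ 2) * min u (u ^ 2) := by
  rcases le_total u 1 with hu1 | hu1
  · rw [min_eq_right (a := u) (by nlinarith)]
    calc min (z * u) ((z * u) ^ 2) ≤ z ^ 2 * u ^ 2 := by rw [mul_pow]; exact min_le_right _ _
      _ ≤ max z (z ^ 2) * u ^ 2 := by gcongr; exact le_max_right _ _
  · rw [min_eq_left (a := u) (by nlinarith)]
    calc min (z * u) ((z * u) ^ 2) ≤ z * u := min_le_left _ _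
      _ ≤ max z (z ^ 2) * u := by gcongr; exact le_max_left _ _

lemma min_one_mul_le_max_mul_min (z : ℝ) {u : ℝ} (hu : 0 ≤ u) :
    min 1 (z * u) ≤ max 1 z * min 1 u := by
  rcases le_total u 1 with hu1 | hu1
  · rw [min_eq_right hu1]
    calc min 1 (z * u) ≤ z * u := min_le_right _ _
      _ ≤ max 1 z * u := by gcongr; exact le_max_right _ _
  · rw [min_eq_left hu1, mul_one]
    exact (min_le_left _ _).trans (le_max_left 1 z)

lemma continuousOn_setIntegral_Ioi_comp_mul {μ : Measure ℝ} {k : ℝ → ℝ} (hk : Continuous k)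
    (hk_nonneg : ∀ x, 0 ≤ x → 0 ≤ k x) (hk_mono : MonotoneOn k (Ici 0))
    (hk_int : ∀ z > 0, IntegrableOn (fun u => k (z * u)) (Ioi 0) μ) :
    ContinuousOn (fun z => ∫ u in Ioi 0, k (z * u) ∂μ) (Ioi 0) := by
  intro z hz
  refine (continuousAt_of_dominated (bound := fun u => k ((z + 1) * u)) ?_ ?_
    (hk_int (z + 1) (by linarith [mem_Ioi.mp hz])) ?_).continuousWithinAt
  · exact Eventually.of_forall fun _ => (by fun_prop : Continuous _).aestronglyMeasurable
  · filter_upwards [Ioo_mem_nhds hz (lt_add_one z)] with z' hz'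
    refine (ae_restrict_iff' measurableSet_Ioi).mpr (ae_of_all _ fun u hu => ?_)
    have hz'u : 0 ≤ z' * u := mul_nonneg hz'.1.le (le_of_lt hu)
    rw [Real.norm_of_nonneg (hk_nonneg _ hz'u)]
    exact hk_mono hz'u (mul_nonneg (hz'.1.trans hz'.2).le (le_of_lt hu))
      (mul_le_mul_of_nonneg_right hz'.2.le (le_of_lt hu))
  · exact ae_of_all _ fun _ => (by fun_prop : Continuous _).continuousAt

section Mechanisms

variable {b σ β : ℝ} {m n : Measure ℝ}

lemma integrableOn_exp_neg_mul_sub_one_add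
    (hm : IntegrableOn (fun u => min u (u ^ 2)) (Ioi 0) m) {z : ℝ} (hz : 0 ≤ z) :
    IntegrableOn (fun u => exp (-(z * u)) - 1 + z * u) (Ioi 0) m := by
  refine (hm.const_mul (max z (z ^ 2))).mono' (by fun_prop : Continuous _).aestronglyMeasurable
    ((ae_restrict_iff' measurableSet_Ioi).mpr (ae_of_all _ fun u hu => ?_))
  rw [Real.norm_of_nonneg (exp_neg_sub_one_add_nonneg _)]
  exact (exp_neg_sub_one_add_le_min (mul_nonneg hz (le_of_lt hu))).trans
    (min_mul_sq_le_max_mul_min z (le_of_lt hu))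

lemma integrableOn_one_sub_exp_neg_mul
    (hn : IntegrableOn (fun u => min 1 u) (Ioi 0) n) {z : ℝ} (hz : 0 ≤ z) :
    IntegrableOn (fun u => 1 - exp (-(z * u))) (Ioi 0) n := by
  refine (hn.const_mul (max 1 z)).mono' (by fun_prop : Continuous _).aestronglyMeasurable
    ((ae_restrict_iff' measurableSet_Ioi).mpr (ae_of_all _ fun u hu => ?_))
  rw [Real.norm_of_nonneg (one_sub_exp_neg_nonneg (mul_nonneg hz (le_of_lt hu)))]
  exact (one_sub_exp_neg_le_min _).trans (min_one_mul_le_max_mul_min z (le_of_lt hu))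

lemma psi_continuousOn (hm : IntegrableOn (fun u => min u (u ^ 2)) (Ioi 0) m) :
    ContinuousOn (psi b σ m) (Ioi 0) :=
  (by fun_prop : Continuous fun z : ℝ => b * z + σ * z ^ 2).continuousOn.add
    (continuousOn_setIntegral_Ioi_comp_mul (k := fun x => exp (-x) - 1 + x) (by fun_prop)
      (fun x _ => exp_neg_sub_one_add_nonneg x) monotoneOn_exp_neg_sub_one_add
      fun _ hz => integrableOn_exp_neg_mul_sub_one_add hm hz.le)

lemma fim_continuousOn (hn : IntegrableOn (fun u => min 1 u) (Ioi 0) n) :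
    ContinuousOn (Fim β n) (Ioi 0) :=
  (by fun_prop : Continuous fun z : ℝ => β * z).continuousOn.add
    (continuousOn_setIntegral_Ioi_comp_mul (k := fun x => 1 - exp (-x)) (by fun_prop)
      (fun _ hx => one_sub_exp_neg_nonneg hx) (monotone_one_sub_exp_neg.monotoneOn _)
      fun _ hz => integrableOn_one_sub_exp_neg_mul hn hz.le)

lemma fim_nonneg (hβ : 0 ≤ β) {z : ℝ} (hz : 0 ≤ z) : 0 ≤ Fim β n z :=
  add_nonneg (mul_nonneg hβ hz) (setIntegral_nonneg measurableSet_Ioi fun _ hu =>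
    one_sub_exp_neg_nonneg (mul_nonneg hz (le_of_lt (mem_Ioi.mp hu))))

lemma psi_pos (hb : 0 ≤ b) (hσ : 0 ≤ σ) (hm : IntegrableOn (fun u => min u (u ^ 2)) (Ioi 0) m)
    (hA3 : condA3 σ m) {z : ℝ} (hz : 0 < z) : 0 < psi b σ m z := by
  have h_int_nonneg : 0 ≤ ∫ u in Ioi 0, (exp (-(z * u)) - 1 + z * u) ∂m :=
    integral_nonneg fun u => exp_neg_sub_one_add_nonneg _
  have hbz : 0 ≤ b * z := mul_nonneg hb hz.le
  unfold psi
  rcases hA3 with hσ_pos | hm_inf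
  · nlinarith [mul_pos hσ_pos (pow_pos hz 2)]
  suffices 0 < ∫ u in Ioi 0, (exp (-(z * u)) - 1 + z * u) ∂m by
    nlinarith [mul_nonneg hσ (sq_nonneg z)]
  -- the integrand vanishes only at `u = 0`, while `∫₀¹ u m(du) = ∞` forces `m (0, ∞) > 0`
  rw [setIntegral_pos_iff_support_of_nonneg_ae
    (ae_of_all _ fun u => exp_neg_sub_one_add_nonneg _)
    (integrableOn_exp_neg_mul_sub_one_add hm hz.le)]
  have h_support : Ioi 0 ⊆ Function.support fun u => exp (-(z * u)) - 1 + z * u := fun u hu =>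
    ne_of_gt (by linarith [add_one_lt_exp (neg_ne_zero.mpr (mul_pos hz (mem_Ioi.mp hu)).ne')])
  rw [inter_eq_right.mpr h_support]
  refine pos_iff_ne_zero.mpr fun h_null => ?_
  have : m.restrict (Ioc 0 1) = 0 :=
    Measure.restrict_eq_zero.mpr (measure_mono_null Ioc_subset_Ioi_self h_null)
  simp [this] at hm_inf

end Mechanisms

section ChangeOfVariables

variable {f : ℝ → ℝ} {a lam : ℝ}

lemma strictAntiOn_integral_of_pos (hf : ContinuousOn f (Ioc a lam))
    (hf_pos : ∀ z ∈ Ioc a lam, 0 < f z) :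
    StrictAntiOn (fun r => ∫ z in r..lam, f z) (Ioc a lam) := by
  intro x hx y hy hxy
  have h_int_xy : IntervalIntegrable f volume x y :=
    (hf.mono (Icc_subset_Ioc hx.1 hy.2)).intervalIntegrable_of_Icc hxy.le
  have h_int_y : IntervalIntegrable f volume y lam :=
    (hf.mono (Icc_subset_Ioc hy.1 le_rfl)).intervalIntegrable_of_Icc hy.2
  have h_pos : 0 < ∫ z in x..y, f z := intervalIntegral.intervalIntegral_pos_of_pos_on h_int_xy
    (fun z hz => hf_pos z ⟨hx.1.trans hz.1, hz.2.le.trans hy.2⟩) hxy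
  have := intervalIntegral.integral_add_adjacent_intervals h_int_xy h_int_y
  simp only
  linarith

lemma hasDerivAt_integral_of_continuousOn (hf : ContinuousOn f (Ioc a lam)) {r : ℝ}
    (hr : r ∈ Ioo a lam) : HasDerivAt (fun r => ∫ z in r..lam, f z) (-f r) r :=
  intervalIntegral.integral_hasDerivAt_left
    ((hf.mono (Icc_subset_Ioc hr.1 le_rfl)).intervalIntegrable_of_Icc hr.2.le)
    ((hf.mono Ioo_subset_Ioc_self).stronglyMeasurableAtFilter isOpen_Ioo r hr)
    (hf.continuousAt (Ioc_mem_nhds hr.1 hr.2))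

theorem setLIntegral_Ioi_comp_eq_of_integral_eq (hf : ContinuousOn f (Ioc a lam))
    (hf_pos : ∀ z ∈ Ioc a lam, 0 < f z) {v : ℝ → ℝ}
    (hv : ∀ t ≥ (0 : ℝ), v t ∈ Ioc a lam ∧ ∫ z in (v t)..lam, f z = t) (g : ℝ → ℝ≥0∞) :
    ∫⁻ s in Ioi 0, g (v s) = ∫⁻ r in Ioo a lam, ENNReal.ofReal (f r) * g r := by
  set T : ℝ → ℝ := fun r => ∫ z in r..lam, f z
  have hT_anti : StrictAntiOn T (Ioc a lam) := strictAntiOn_integral_of_pos hf hf_pos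
  have hT_lam : T lam = 0 := intervalIntegral.integral_same
  have h_lam : lam ∈ Ioc a lam := ⟨(hv 0 le_rfl).1.1.trans_le (hv 0 le_rfl).1.2, le_rfl⟩
  have hT_pos : ∀ r ∈ Ioo a lam, 0 < T r := fun r hr =>
    hT_lam ▸ hT_anti ⟨hr.1, hr.2.le⟩ h_lam hr.2
  have hvT : ∀ r ∈ Ioo a lam, v (T r) = r := fun r hr =>
    hT_anti.injOn (hv _ (hT_pos r hr).le).1 ⟨hr.1, hr.2.le⟩ (hv _ (hT_pos r hr).le).2
  have hT_image : T '' Ioo a lam = Ioi 0 := by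
    refine Subset.antisymm (image_subset_iff.mpr hT_pos) fun s hs => ?_
    obtain ⟨hvs, hTvs⟩ := hv s (le_of_lt hs)
    have hvs_ne : v s ≠ lam := fun h_eq =>
      (mem_Ioi.mp hs).ne' (by rw [← hTvs, h_eq]; exact hT_lam)
    exact ⟨v s, ⟨hvs.1, lt_of_le_of_ne hvs.2 hvs_ne⟩, hTvs⟩
  calc ∫⁻ s in Ioi 0, g (v s) = ∫⁻ s in T '' Ioo a lam, g (v s) := by rw [hT_image]
    _ = ∫⁻ r in Ioo a lam, ENNReal.ofReal (-(-f r)) * g (v (T r)) :=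
      lintegral_image_eq_lintegral_deriv_mul_of_antitoneOn measurableSet_Ioo
        (fun r hr => (hasDerivAt_integral_of_continuousOn hf hr).hasDerivWithinAt)
        (hT_anti.antitoneOn.mono Ioo_subset_Ioc_self) _
    _ = ∫⁻ r in Ioo a lam, ENNReal.ofReal (f r) * g r :=
      setLIntegral_congr_fun measurableSet_Ioo fun r hr => by rw [neg_neg, hvT r hr]

end ChangeOfVariables

lemma integrableOn_Ioo_of_continuousOn_Ioi {f : ℝ → ℝ} {a c : ℝ}
    (hf_int : IntegrableOn f (Ioo a c)) (hac : a < c) (hf : ContinuousOn f (Ioi a)) (d : ℝ) :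
    IntegrableOn f (Ioo a d) :=
  (hf_int.union (hf.mono fun _ hx => hac.trans_le hx.1).integrableOn_Icc).mono_set fun x hx =>
    (lt_or_ge x c).imp (fun hxc => ⟨hx.1, hxc⟩) fun hxc => ⟨hxc, hx.2.le⟩

lemma exists_integrableOn_Ioo_iff_forall_lintegral_lt_top {f : ℝ → ℝ} {a : ℝ}
    (hf : ContinuousOn f (Ioi a)) (hf_nonneg : ∀ x > a, 0 ≤ f x) :
    (∃ c > a, IntegrableOn f (Ioo a c)) ↔
      ∀ c > a, ∫⁻ x in Ioo a c, ENNReal.ofReal (f x) < ⊤ := by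
  refine ⟨fun ⟨c, hac, hf_int⟩ d _ =>
    (integrableOn_Ioo_of_continuousOn_Ioi hf_int hac hf d).lintegral_lt_top,
    fun h_fin => ⟨a + 1, lt_add_one a, ?_⟩⟩
  refine (lintegral_ofReal_ne_top_iff_integrable ?_ ?_).mp (h_fin _ (lt_add_one a)).ne
  · exact (hf.mono Ioo_subset_Ioi_self).aestronglyMeasurable measurableSet_Ioo
  · exact (ae_restrict_iff' measurableSet_Ioo).mpr (ae_of_all _ fun x hx => hf_nonneg x hx.1)

theorem integral_F_cumulant_eq (b σ β : ℝ) (m n : Measure ℝ)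
    (hb : 0 ≤ b) (hσ : 0 ≤ σ) (hβ : 0 ≤ β)
    (hm : IntegrableOn (fun u => min u (u ^ 2)) (Ioi 0) m)
    (hn : IntegrableOn (fun u => min 1 u) (Ioi 0) n)
    (hA3 : condA3 σ m)
    (v : ℝ → ℝ → ℝ) (hv : IsCumulant b σ m v) :
    (∀ lam > (0 : ℝ),
      ∫⁻ s in Ioi (0 : ℝ), ENNReal.ofReal (Fim β n (v s lam)) =
        ∫⁻ r in Ioo (0 : ℝ) lam, ENNReal.ofReal (Fim β n r / psi b σ m r)) ∧
    ((∃ lam > (0 : ℝ),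
        IntegrableOn (fun z => Fim β n z / psi b σ m z) (Ioo 0 lam)) ↔
      ∀ lam > (0 : ℝ),
        ∫⁻ s in Ioi (0 : ℝ), ENNReal.ofReal (Fim β n (v s lam)) < ⊤) := by
  have hψ_pos : ∀ z ∈ Ioi (0 : ℝ), 0 < psi b σ m z := fun z hz => psi_pos hb hσ hm hA3 hz
  have h_change : ∀ lam > (0 : ℝ),
      ∫⁻ s in Ioi (0 : ℝ), ENNReal.ofReal (Fim β n (v s lam)) =
        ∫⁻ r in Ioo (0 : ℝ) lam, ENNReal.ofReal (Fim β n r / psi b σ m r) := by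
    intro lam hlam
    rw [setLIntegral_Ioi_comp_eq_of_integral_eq (f := fun z => (psi b σ m z)⁻¹)
      (((psi_continuousOn hm).inv₀ fun z hz => (hψ_pos z hz).ne').mono Ioc_subset_Ioi_self)
      (fun z hz => inv_pos.mpr (hψ_pos z hz.1)) (hv lam hlam) fun r => ENNReal.ofReal (Fim β n r)]
    refine setLIntegral_congr_fun measurableSet_Ioo fun r hr => ?_
    rw [div_eq_inv_mul, ENNReal.ofReal_mul (inv_nonneg.mpr (hψ_pos r hr.1).le)]
  have h_ratio : ContinuousOn (fun z => Fim β n z / psi b σ m z) (Ioi 0) :=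
    (fim_continuousOn hn).div (psi_continuousOn hm) fun z hz => (hψ_pos z hz).ne'
  refine ⟨h_change, (exists_integrableOn_Ioo_iff_forall_lintegral_lt_top h_ratio
    fun z hz => div_nonneg (fim_nonneg hβ hz.le) (hψ_pos z hz).le).trans ?_⟩
  exact forall₂_congr fun lam hlam => by rw [h_change lam hlam]
end

section
/- (Bottleneck effect.) Assume conditions (A1), (A2) and (A3), and fix t > 0. Let μ₀ and μ_t be probability measures on [0,∞) whose Laplace transforms satisfy, for all λ ≥ 0, ∫ e^{−λ z} μ₀(dz) = exp(−G(λ)) and ∫ e^{−λ z} μ_t(dz) = exp(−(G(λ + c(t)) − G(c(t)))). Then μ_t is stochastically smaller than μ₀: μ_t([0, z]) ≥ μ₀([0, z]) for every z ≥ 0. (Here μ₀ is the law of the stationary population size Z₀ and μ_t is the conditional law of the population size Z^A just before the MRCA given A = t.) -/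
/-!
The Laplace-transform identities say exactly that `μt` is the exponential tilt of `μ₀` by
`x ↦ e^{-c(t) x}`: both have Laplace transform `λ ↦ L₀(λ + c(t)) / L₀(c(t))`, where `L₀` is
that of `μ₀`. Laplace transforms at integers are the moments of the image under `x ↦ e^{-x}`,
a measure on `[0, 1]`, and these determine it by Weierstrass approximation; so `μt` equals the
tilt. Tilting by a decreasing weight can only move mass towards `0`: by Chebyshev's sum
inequality (Harris' inequality on a line), `μ₀[0,z] · ∫ w dμ₀ ≤ ∫_{[0,z]} w dμ₀` for
decreasing `w`.
-/

open MeasureTheory Real Set Filter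

/-- Condition (A2): `∫₀^λ F(z)/ψ(z) dz < ∞` for some `λ > 0`. -/
def condA2 (b σ β : ℝ) (m n : Measure ℝ) : Prop :=
  ∃ lam > (0 : ℝ), IntegrableOn (fun z => Fim β n z / psi b σ m z) (Ioo 0 lam)

/-- Under (A1) and (A3), `c(t) ∈ (0,∞)` is defined by `∫_{c(t)}^∞ dz/ψ(z) = t`. -/
def IsExtinctionRate (b σ : ℝ) (m : Measure ℝ) (c : ℝ → ℝ) : Prop :=
  ∀ t > (0 : ℝ), 0 < c t ∧ ∫ z in Ioi (c t), (psi b σ m z)⁻¹ = t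

namespace MeasureTheory

lemma integrable_of_ae_mem_Icc {μ : Measure ℝ} [IsFiniteMeasure μ] {a b : ℝ}
    (hμ : ∀ᵐ x ∂μ, x ∈ Icc a b) {f : ℝ → ℝ} (hf : ContinuousOn f (Icc a b)) :
    Integrable f μ := by
  rw [← Measure.restrict_eq_self_of_ae_mem hμ]
  exact hf.integrableOn_compact isCompact_Icc

lemma abs_integral_sub_le_of_ae_mem_Icc {μ : Measure ℝ} [IsFiniteMeasure μ] {a b : ℝ}
    (hμ : ∀ᵐ x ∂μ, x ∈ Icc a b) {f g : ℝ → ℝ} (hf : ContinuousOn f (Icc a b))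
    (hg : ContinuousOn g (Icc a b)) {ε : ℝ} (hfg : ∀ x ∈ Icc a b, |f x - g x| ≤ ε) :
    |∫ x, f x ∂μ - ∫ x, g x ∂μ| ≤ ε * μ.real univ := by
  rw [← integral_sub (integrable_of_ae_mem_Icc hμ hf) (integrable_of_ae_mem_Icc hμ hg),
    ← norm_eq_abs]
  exact norm_integral_le_of_norm_le_const
    (hμ.mono fun x hx => (norm_eq_abs _).trans_le (hfg x hx))

lemma integral_eval_eq_of_integral_pow_eq {μ ν : Measure ℝ} [IsFiniteMeasure μ]
    [IsFiniteMeasure ν] {a b : ℝ} (hμ : ∀ᵐ x ∂μ, x ∈ Icc a b)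
    (hν : ∀ᵐ x ∂ν, x ∈ Icc a b) (h : ∀ n : ℕ, ∫ x, x ^ n ∂μ = ∫ x, x ^ n ∂ν)
    (p : Polynomial ℝ) :
    ∫ x, p.eval x ∂μ = ∫ x, p.eval x ∂ν := by
  have hterm : ∀ (ρ : Measure ℝ) [IsFiniteMeasure ρ], (∀ᵐ x ∂ρ, x ∈ Icc a b) →
      ∀ i : ℕ, Integrable (fun x => p.coeff i * x ^ i) ρ := fun ρ _ hρ i =>
    integrable_of_ae_mem_Icc hρ (by fun_prop)
  simp_rw [Polynomial.eval_eq_sum_range]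
  rw [integral_finsetSum _ fun i _ => hterm μ hμ i,
    integral_finsetSum _ fun i _ => hterm ν hν i]
  simp_rw [integral_const_mul, h]

theorem Measure.ext_of_integral_pow_eq_of_ae_mem_Icc {μ ν : Measure ℝ} [IsFiniteMeasure μ]
    [IsFiniteMeasure ν] {a b : ℝ} (hμ : ∀ᵐ x ∂μ, x ∈ Icc a b)
    (hν : ∀ᵐ x ∂ν, x ∈ Icc a b) (h : ∀ n : ℕ, ∫ x, x ^ n ∂μ = ∫ x, x ^ n ∂ν) :
    μ = ν := by
  refine ext_of_forall_integral_eq_of_IsFiniteMeasure fun f =>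
    eq_of_forall_dist_le fun ε hε => ?_
  set K := μ.real univ + ν.real univ + 1
  have hK : 0 < K := by positivity
  have hf : ContinuousOn f (Icc a b) := f.continuous.continuousOn
  obtain ⟨p, hp⟩ := exists_polynomial_near_of_continuousOn a b f hf (ε / K) (by positivity)
  have hfp : ∀ x ∈ Icc a b, |f x - p.eval x| ≤ ε / K := fun x hx => by
    rw [abs_sub_comm]; exact (hp x hx).le
  have hp' : ContinuousOn (fun x => p.eval x) (Icc a b) := p.continuous.continuousOn
  have hμp := abs_integral_sub_le_of_ae_mem_Icc hμ hf hp' hfp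
  have hνp := abs_integral_sub_le_of_ae_mem_Icc hν hf hp' hfp
  rw [integral_eval_eq_of_integral_pow_eq hμ hν h p] at hμp
  calc dist (∫ x, f x ∂μ) (∫ x, f x ∂ν)
      ≤ ε / K * μ.real univ + ε / K * ν.real univ := by
        rw [dist_eq]
        exact (abs_sub_le _ _ _).trans (add_le_add hμp (by rwa [abs_sub_comm]))
    _ ≤ ε := by
        rw [← mul_add, div_mul_eq_mul_div, div_le_iff₀ hK]
        nlinarith

theorem Measure.ext_of_integral_exp_neg_nat_mul_eq {μ ν : Measure ℝ} [IsFiniteMeasure μ]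
    [IsFiniteMeasure ν] (hμ : ∀ᵐ x ∂μ, 0 ≤ x) (hν : ∀ᵐ x ∂ν, 0 ≤ x)
    (h : ∀ n : ℕ, ∫ x, exp (-(n * x)) ∂μ = ∫ x, exp (-(n * x)) ∂ν) : μ = ν := by
  have hφ : Measurable fun x : ℝ => exp (-x) := by fun_prop
  have hsupp : ∀ ρ : Measure ℝ, (∀ᵐ x ∂ρ, 0 ≤ x) →
      ∀ᵐ y ∂ρ.map fun x => exp (-x), y ∈ Icc (0 : ℝ) 1 := fun ρ hρ => by
    refine (ae_map_iff hφ.aemeasurable (p := (· ∈ Icc (0 : ℝ) 1)) measurableSet_Icc).mpr ?_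
    exact hρ.mono fun x hx => ⟨(exp_pos _).le, exp_le_one_iff.mpr (neg_nonpos.mpr hx)⟩
  have hmap : μ.map (fun x => exp (-x)) = ν.map (fun x => exp (-x)) := by
    refine Measure.ext_of_integral_pow_eq_of_ae_mem_Icc (hsupp μ hμ) (hsupp ν hν) fun n => ?_
    rw [integral_map hφ.aemeasurable (by fun_prop), integral_map hφ.aemeasurable (by fun_prop)]
    simpa only [← exp_nat_mul, mul_neg] using h n
  have hinv : ∀ ρ : Measure ℝ, (ρ.map fun x => exp (-x)).map (fun y => -log y) = ρ := by
    intro ρ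
    rw [Measure.map_map (by fun_prop) hφ]
    simp [Function.comp_def]
  rw [← hinv μ, hmap, hinv ν]

theorem measureReal_Iic_mul_integral_le_of_antitone {α : Type*} [LinearOrder α]
    [TopologicalSpace α] [OrderClosedTopology α] [MeasurableSpace α] [OpensMeasurableSpace α]
    {μ : Measure α} [IsFiniteMeasure μ] {w : α → ℝ} (hw : Antitone w)
    (hwi : Integrable w μ) (z : α) :
    μ.real (Iic z) * ∫ x, w x ∂μ ≤ μ.real univ * ∫ x in Iic z, w x ∂μ := by
  have hA : MeasurableSet (Iic z) := measurableSet_Iic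
  have hlow : w z * μ.real (Iic z) ≤ ∫ x in Iic z, w x ∂μ :=
    setIntegral_ge_of_const_le_real hA (measure_ne_top _ _) (fun x hx => hw hx) hwi.integrableOn
  have hhigh : ∫ x in (Iic z)ᶜ, w x ∂μ ≤ w z * μ.real (Iic z)ᶜ := by
    rw [mul_comm, ← smul_eq_mul, ← setIntegral_const]
    refine setIntegral_mono_on hwi.integrableOn (integrable_const _) hA.compl fun x hx => ?_
    exact hw (le_of_lt (not_le.mp hx))
  rw [← integral_add_compl hA hwi, ← measureReal_add_measureReal_compl hA]
  have hP := measureReal_nonneg (μ := μ) (s := Iic z)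
  have hQ := measureReal_nonneg (μ := μ) (s := (Iic z)ᶜ)
  nlinarith [mul_le_mul_of_nonneg_left hlow hQ, mul_le_mul_of_nonneg_left hhigh hP]

theorem measure_Iic_le_tilted_of_antitone {α : Type*} [LinearOrder α]
    [TopologicalSpace α] [OrderClosedTopology α] [MeasurableSpace α] [OpensMeasurableSpace α]
    {μ : Measure α} [IsProbabilityMeasure μ] {f : α → ℝ} (hf : Antitone f)
    (hfi : Integrable (fun x => exp (f x)) μ) (z : α) :
    μ (Iic z) ≤ μ.tilted f (Iic z) := by
  have hharris := measureReal_Iic_mul_integral_le_of_antitone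
    (fun _ _ hxy => exp_le_exp.mpr (hf hxy)) hfi z
  rw [probReal_univ, one_mul] at hharris
  rw [tilted_apply_eq_ofReal_integral' f measurableSet_Iic, integral_div,
    ← ofReal_measureReal]
  exact ENNReal.ofReal_le_ofReal ((le_div_iff₀ (integral_exp_pos hfi)).mpr hharris)

end MeasureTheory

theorem bottleneck_effect_general (b σ β : ℝ) (m n : Measure ℝ)
    (v : ℝ → ℝ → ℝ)
    (c : ℝ → ℝ) (hc : IsExtinctionRate b σ m c)
    (t : ℝ) (ht : 0 < t)
    (μ₀ μt : Measure ℝ) [IsProbabilityMeasure μ₀] [IsProbabilityMeasure μt]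
    (hsupp₀ : μ₀ (Iio 0) = 0) (hsuppt : μt (Iio 0) = 0)
    (hL₀ : ∀ lam ≥ (0 : ℝ),
      ∫ x, Real.exp (-(lam * x)) ∂μ₀ =
        Real.exp (-(∫ s in Ioi (0 : ℝ), Fim β n (v s lam))))
    (hLt : ∀ lam ≥ (0 : ℝ),
      ∫ x, Real.exp (-(lam * x)) ∂μt =
        Real.exp (-((∫ s in Ioi (0 : ℝ), Fim β n (v s (lam + c t))) -
          ∫ s in Ioi (0 : ℝ), Fim β n (v s (c t))))) :
    ∀ z ≥ (0 : ℝ), μ₀ (Icc 0 z) ≤ μt (Icc 0 z) := by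
  intro z _
  obtain ⟨hC, -⟩ := hc t ht
  set f : ℝ → ℝ := fun x => -(c t * x)
  have hf : Antitone f := fun x y hxy => neg_le_neg (mul_le_mul_of_nonneg_left hxy hC.le)
  have hfi : Integrable (fun x => exp (f x)) μ₀ :=
    .of_integral_ne_zero (by rw [hL₀ _ hC.le]; exact (exp_pos _).ne')
  have hnonneg : ∀ ρ : Measure ℝ, ρ (Iio 0) = 0 → ∀ᵐ x ∂ρ, 0 ≤ x := fun ρ hρ =>
    (measure_eq_zero_iff_ae_notMem.mp hρ).mono fun x hx => not_lt.mp hx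
  have htilt : μt = μ₀.tilted f := by
    refine Measure.ext_of_integral_exp_neg_nat_mul_eq (hnonneg μt hsuppt)
      ((tilted_absolutelyContinuous μ₀ f).ae_le (hnonneg μ₀ hsupp₀)) fun k => ?_
    have hsum : ∀ x : ℝ, (f + fun x => -((k : ℝ) * x)) x = -((k + c t) * x) := fun x => by
      simp only [f, Pi.add_apply]; ring
    rw [integral_exp_tilted, hLt _ k.cast_nonneg]
    simp only [hsum]
    rw [hL₀ _ (by positivity), hL₀ _ hC.le, ← exp_sub]
    ring_nf
  calc μ₀ (Icc 0 z) ≤ μ₀ (Iic z) := measure_mono Icc_subset_Iic_self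
    _ ≤ μ₀.tilted f (Iic z) := measure_Iic_le_tilted_of_antitone hf hfi z
    _ = μt (Iic z) := by rw [htilt]
    _ ≤ μt (Iio 0) + μt (Icc 0 z) :=
        (measure_mono Iic_subset_Iio_union_Icc).trans (measure_union_le _ _)
    _ = μt (Icc 0 z) := by rw [hsuppt, zero_add]

theorem bottleneck_effect (b σ β : ℝ) (m n : Measure ℝ)
    (hb : 0 ≤ b) (hσ : 0 ≤ σ) (hβ : 0 ≤ β)
    (hm : IntegrableOn (fun u => min u (u ^ 2)) (Ioi 0) m)
    (hn : IntegrableOn (fun u => min 1 u) (Ioi 0) n)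
    (hA1 : IntegrableOn (fun z => (psi b σ m z)⁻¹) (Ioi 1))
    (hA2 : condA2 b σ β m n) (hA3 : condA3 σ m)
    (v : ℝ → ℝ → ℝ) (hv : IsCumulant b σ m v)
    (hv0 : ∀ t ≥ (0 : ℝ), v t 0 = 0)
    (c : ℝ → ℝ) (hc : IsExtinctionRate b σ m c)
    (t : ℝ) (ht : 0 < t)
    (μ₀ μt : Measure ℝ) [IsProbabilityMeasure μ₀] [IsProbabilityMeasure μt]
    (hsupp₀ : μ₀ (Iio 0) = 0) (hsuppt : μt (Iio 0) = 0)
    (hL₀ : ∀ lam ≥ (0 : ℝ),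
      ∫ x, Real.exp (-(lam * x)) ∂μ₀ =
        Real.exp (-(∫ s in Ioi (0 : ℝ), Fim β n (v s lam))))
    (hLt : ∀ lam ≥ (0 : ℝ),
      ∫ x, Real.exp (-(lam * x)) ∂μt =
        Real.exp (-((∫ s in Ioi (0 : ℝ), Fim β n (v s (lam + c t))) -
          ∫ s in Ioi (0 : ℝ), Fim β n (v s (c t))))) :
    ∀ z ≥ (0 : ℝ), μ₀ (Icc 0 z) ≤ μt (Icc 0 z) :=
  bottleneck_effect_general b σ β m n v c hc t ht μ₀ μt hsupp₀ hsuppt hL₀ hLt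
end

section
/- Let F be an immigration mechanism with F(x) > 0 for x > 0, and fix x > 0. Then for every a ∈ [0,1], F(x) − F((1−a)x) = Σ_{n≥1} (−1)^{n+1} F^{(n)}(x) (a x)^n / n!, where every term of the series is nonnegative. Consequently, the numbers p_n := (−1)^{n+1} x^n F^{(n)}(x) / (n! F(x)), n ≥ 1, satisfy p_n ≥ 0 and Σ_{n≥1} p_n = 1, i.e. (p_n)_{n≥1} is a probability distribution on the positive integers. (With x = c(t), p_n = P(N^A = n | A = t) is the conditional distribution of the number of oldest families.) -/
open MeasureTheory Real Set Filter

/-!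
For `z > 0`, differentiating under the integral sign gives `F'(z) = β + ∫ u e^{-zu} n(du)` and
`(-1)^{k+1} F^{(k)}(z) = ∫ u^k e^{-zu} n(du)` for `k ≥ 2`; the domination comes from
`u^k e^{-cu} ≤ C min(1, u)` and the integrability of `min(1, u)`. Hence
`F(x) - F(x - h) = β h + ∫ e^{-xu} (e^{hu} - 1) n(du)`, and since the power series of
`e^{hu} - 1` has nonnegative terms it may be integrated termwise, which is the claimed expansion.
Taking `h = x` (where `F(0) = 0`) and dividing by `F(x) > 0` gives the probability distribution.
-/

lemma pow_mul_exp_neg_le {c u : ℝ} (hc : 0 < c) (hu : 0 ≤ u) (j : ℕ) :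
    u ^ j * exp (-(c * u)) ≤ j.factorial / c ^ j := by
  have hcu : 0 ≤ c * u := mul_nonneg hc.le hu
  calc u ^ j * exp (-(c * u))
      = (c * u) ^ j / j.factorial * exp (-(c * u)) * (j.factorial / c ^ j) := by
        field_simp; ring
    _ ≤ exp (c * u) * exp (-(c * u)) * (j.factorial / c ^ j) := by
        gcongr; exact pow_div_factorial_le_exp _ hcu j
    _ = j.factorial / c ^ j := by rw [← exp_add, add_neg_cancel, exp_zero, one_mul]

lemma pow_succ_mul_exp_neg_le_mul_min {c u : ℝ} (hc : 0 < c) (hu : 0 ≤ u) (j : ℕ) :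
    u ^ (j + 1) * exp (-(c * u)) ≤
      max (j.factorial / c ^ j) ((j + 1).factorial / c ^ (j + 1)) * min 1 u := by
  rcases le_total u 1 with h | h
  · rw [min_eq_right h]
    calc u ^ (j + 1) * exp (-(c * u)) = u * (u ^ j * exp (-(c * u))) := by ring
      _ ≤ u * max (j.factorial / c ^ j) ((j + 1).factorial / c ^ (j + 1)) := by
        gcongr; exact (pow_mul_exp_neg_le hc hu j).trans (le_max_left _ _)
      _ = _ := mul_comm _ _
  · rw [min_eq_left h, mul_one]
    exact (pow_mul_exp_neg_le hc hu (j + 1)).trans (le_max_right _ _)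

lemma one_sub_exp_neg_le_mul_min {z u : ℝ} (hu : 0 ≤ u) :
    1 - exp (-(z * u)) ≤ max 1 z * min 1 u := by
  have h_le_one : 1 - exp (-(z * u)) ≤ 1 := by linarith [exp_pos (-(z * u))]
  have h_le_mul : 1 - exp (-(z * u)) ≤ z * u := by linarith [add_one_le_exp (-(z * u))]
  rcases le_total u 1 with h | h
  · rw [min_eq_right h]
    exact h_le_mul.trans (by gcongr; exact le_max_right _ _)
  · rw [min_eq_left h, mul_one]
    exact h_le_one.trans (le_max_left _ _)

lemma hasSum_integral_of_nonneg {α ι : Type*} [MeasurableSpace α] [Countable ι]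
    {μ : Measure α} {F : ι → α → ℝ} {f : α → ℝ}
    (hF_meas : ∀ i, AEStronglyMeasurable (F i) μ) (hF_nonneg : ∀ i, ∀ᵐ a ∂μ, 0 ≤ F i a)
    (hf : Integrable f μ) (h_lim : ∀ᵐ a ∂μ, HasSum (fun i => F i a) (f a)) :
    HasSum (fun i => ∫ a, F i a ∂μ) (∫ a, f a ∂μ) :=
  hasSum_integral_of_dominated_convergence F hF_meas
    (fun i => (hF_nonneg i).mono fun _ ha => (norm_of_nonneg ha).le)
    (h_lim.mono fun _ ha => ha.summable)
    (hf.congr (h_lim.mono fun _ ha => ha.tsum_eq.symm)) h_lim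

lemma hasDerivAt_exp_neg_mul (u w : ℝ) :
    HasDerivAt (fun w => exp (-(w * u))) (-(u * exp (-(w * u)))) w := by
  convert ((hasDerivAt_mul_const u).fun_neg).exp (x := w) using 1
  ring

noncomputable def laplaceMoment (μ : Measure ℝ) (k : ℕ) (z : ℝ) : ℝ :=
  ∫ u, u ^ k * exp (-(z * u)) ∂μ

section LaplaceMoment

variable {μ : Measure ℝ}

lemma laplaceMoment_nonneg (hpos : ∀ᵐ u ∂μ, 0 ≤ u) (k : ℕ) (z : ℝ) :
    0 ≤ laplaceMoment μ k z :=
  integral_nonneg_of_ae (hpos.mono fun u hu => by positivity)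

lemma integrable_pow_succ_mul_exp_neg (hμ : Integrable (fun u => min 1 u) μ)
    (hpos : ∀ᵐ u ∂μ, 0 ≤ u) {z : ℝ} (hz : 0 < z) (j : ℕ) :
    Integrable (fun u => u ^ (j + 1) * exp (-(z * u))) μ :=
  (hμ.const_mul _).mono' (by fun_prop) <| hpos.mono fun u hu => by
    rw [norm_of_nonneg (by positivity)]
    exact pow_succ_mul_exp_neg_le_mul_min hz hu j

lemma integrable_one_sub_exp_neg (hμ : Integrable (fun u => min 1 u) μ)
    (hpos : ∀ᵐ u ∂μ, 0 ≤ u) {z : ℝ} (hz : 0 ≤ z) :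
    Integrable (fun u => 1 - exp (-(z * u))) μ :=
  (hμ.const_mul _).mono' (by fun_prop) <| hpos.mono fun u hu => by
    have : exp (-(z * u)) ≤ 1 := exp_le_one_iff.mpr (by nlinarith)
    rw [norm_of_nonneg (by linarith)]
    exact one_sub_exp_neg_le_mul_min hu

lemma hasDerivAt_integral_of_hasDerivAt_pow_mul_exp (hμ : Integrable (fun u => min 1 u) μ)
    (hpos : ∀ᵐ u ∂μ, 0 ≤ u) {g : ℝ → ℝ → ℝ} (j : ℕ)
    (hg_meas : ∀ w, AEStronglyMeasurable (g w) μ) {z : ℝ} (hz : 0 < z)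
    (hg_int : Integrable (g z) μ)
    (hg : ∀ w u, HasDerivAt (g · u) (u ^ (j + 1) * exp (-(w * u))) w) :
    HasDerivAt (fun w => ∫ u, g w u ∂μ) (laplaceMoment μ (j + 1) z) z := by
  refine (hasDerivAt_integral_of_dominated_loc_of_deriv_le (Ioi_mem_nhds (half_lt_self hz))
    (Eventually.of_forall hg_meas) hg_int (by fun_prop) ?_
    (hμ.const_mul (max (j.factorial / (z / 2) ^ j) ((j + 1).factorial / (z / 2) ^ (j + 1))))
    (ae_of_all _ fun u w _ => hg w u)).2
  filter_upwards [hpos] with u hu w hw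
  rw [norm_of_nonneg (by positivity)]
  calc u ^ (j + 1) * exp (-(w * u)) ≤ u ^ (j + 1) * exp (-(z / 2 * u)) := by
        gcongr; exact le_of_lt hw
    _ ≤ _ := pow_succ_mul_exp_neg_le_mul_min (half_pos hz) hu j

lemma hasDerivAt_integral_one_sub_exp_neg (hμ : Integrable (fun u => min 1 u) μ)
    (hpos : ∀ᵐ u ∂μ, 0 ≤ u) {z : ℝ} (hz : 0 < z) :
    HasDerivAt (fun w => ∫ u, 1 - exp (-(w * u)) ∂μ) (laplaceMoment μ 1 z) z :=
  hasDerivAt_integral_of_hasDerivAt_pow_mul_exp hμ hpos 0 (fun _ => by fun_prop) hz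
    (integrable_one_sub_exp_neg hμ hpos hz.le) fun w u => by
      simpa using (hasDerivAt_exp_neg_mul u w).const_sub 1

lemma hasDerivAt_laplaceMoment (hμ : Integrable (fun u => min 1 u) μ)
    (hpos : ∀ᵐ u ∂μ, 0 ≤ u) (j : ℕ) {z : ℝ} (hz : 0 < z) :
    HasDerivAt (laplaceMoment μ (j + 1)) (-laplaceMoment μ (j + 2) z) z := by
  have h := hasDerivAt_integral_of_hasDerivAt_pow_mul_exp hμ hpos (j + 1)
    (g := fun w u => -(u ^ (j + 1) * exp (-(w * u)))) (fun _ => by fun_prop) hz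
    (integrable_pow_succ_mul_exp_neg hμ hpos hz j).neg fun w u => by
      refine ((hasDerivAt_exp_neg_mul u w).const_mul (u ^ (j + 1))).fun_neg.congr_deriv ?_
      ring
  have h_eq : laplaceMoment μ (j + 1) = fun w => -∫ u, -(u ^ (j + 1) * exp (-(w * u))) ∂μ := by
    funext w
    simp [laplaceMoment, integral_neg]
  exact h_eq ▸ h.fun_neg

lemma hasSum_laplaceMoment_mul_pow (hμ : Integrable (fun u => min 1 u) μ)
    (hpos : ∀ᵐ u ∂μ, 0 ≤ u) {x h : ℝ} (hx : 0 < x) (hh : 0 ≤ h) (hhx : h ≤ x) :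
    HasSum (fun j : ℕ => laplaceMoment μ (j + 1) x * h ^ (j + 1) / (j + 1).factorial)
      ((∫ u, 1 - exp (-(x * u)) ∂μ) - ∫ u, 1 - exp (-((x - h) * u)) ∂μ) := by
  have h_exp (u : ℝ) : HasSum (fun j : ℕ => (h * u) ^ (j + 1) / (j + 1).factorial)
      (exp (h * u) - 1) := by
    simpa [← Real.exp_eq_exp_ℝ] using
      (hasSum_nat_add_iff' 1).mpr (NormedSpace.expSeries_div_hasSum_exp (h * u))
  rw [← integral_sub (integrable_one_sub_exp_neg hμ hpos hx.le)
    (integrable_one_sub_exp_neg hμ hpos (sub_nonneg.mpr hhx))]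
  refine (hasSum_integral_of_nonneg
    (F := fun j u => u ^ (j + 1) * exp (-(x * u)) * (h ^ (j + 1) / (j + 1).factorial))
    (fun _ => by fun_prop) (fun j => hpos.mono fun u hu => by positivity)
    ((integrable_one_sub_exp_neg hμ hpos hx.le).sub
      (integrable_one_sub_exp_neg hμ hpos (sub_nonneg.mpr hhx)))
    (ae_of_all _ fun u => ?_)).congr_fun fun j => ?_
  · have h_val : (1 - exp (-(x * u))) - (1 - exp (-((x - h) * u))) =
        exp (-(x * u)) * (exp (h * u) - 1) := by
      rw [mul_sub, ← exp_add, show -(x * u) + h * u = -((x - h) * u) by ring]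
      ring
    rw [Pi.sub_apply, h_val]
    exact ((h_exp u).mul_left _).congr_fun fun j => by ring
  · rw [integral_mul_const, laplaceMoment, mul_div_assoc]

end LaplaceMoment

lemma ae_restrict_Ioi_nonneg (n : Measure ℝ) : ∀ᵐ u ∂n.restrict (Ioi 0), 0 ≤ u :=
  (ae_restrict_mem measurableSet_Ioi).mono fun _ hu => le_of_lt hu

lemma iteratedDeriv_succ_Fim {β : ℝ} {n : Measure ℝ}
    (hn : IntegrableOn (fun u => min 1 u) (Ioi 0) n) (j : ℕ) {z : ℝ} (hz : 0 < z) :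
    iteratedDeriv (j + 1) (Fim β n) z =
      (-1) ^ j * (laplaceMoment (n.restrict (Ioi 0)) (j + 1) z + if j = 0 then β else 0) := by
  have hpos := ae_restrict_Ioi_nonneg n
  induction j generalizing z with
  | zero =>
    rw [iteratedDeriv_one]
    have hF : HasDerivAt (Fim β n) (β * 1 + laplaceMoment (n.restrict (Ioi 0)) 1 z) z :=
      ((hasDerivAt_id' z).const_mul β).fun_add (hasDerivAt_integral_one_sub_exp_neg hn hpos hz)
    rw [hF.deriv]
    simp [add_comm]
  | succ j ih =>
    have h_ev : iteratedDeriv (j + 1) (Fim β n) =ᶠ[nhds z] fun w =>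
        (-1) ^ j * (laplaceMoment (n.restrict (Ioi 0)) (j + 1) w + if j = 0 then β else 0) :=
      eventually_of_mem (Ioi_mem_nhds hz) fun w hw => ih hw
    rw [iteratedDeriv_succ, h_ev.deriv_eq,
      (((hasDerivAt_laplaceMoment hn hpos j hz).add_const _).const_mul _).deriv]
    simp [pow_succ]

lemma neg_one_pow_mul_iteratedDeriv_succ_Fim {β : ℝ} {n : Measure ℝ}
    (hn : IntegrableOn (fun u => min 1 u) (Ioi 0) n) (j : ℕ) {z : ℝ} (hz : 0 < z) :
    (-1) ^ (j + 2) * iteratedDeriv (j + 1) (Fim β n) z =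
      laplaceMoment (n.restrict (Ioi 0)) (j + 1) z + if j = 0 then β else 0 := by
  rw [iteratedDeriv_succ_Fim hn j hz, ← mul_assoc, ← pow_add,
    show j + 2 + j = 2 * (j + 1) by ring, pow_mul]
  simp

lemma hasSum_Fim_sub {β : ℝ} {n : Measure ℝ} (hn : IntegrableOn (fun u => min 1 u) (Ioi 0) n)
    {x h : ℝ} (hx : 0 < x) (hh : 0 ≤ h) (hhx : h ≤ x) :
    HasSum (fun j : ℕ => (-1 : ℝ) ^ (j + 2) * iteratedDeriv (j + 1) (Fim β n) x *
        h ^ (j + 1) / (j + 1).factorial)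
      (Fim β n x - Fim β n (x - h)) := by
  have h_lin : HasSum (fun j : ℕ => if j = 0 then β * h else 0) (β * h) := hasSum_ite_eq 0 _
  have h_sum := (hasSum_laplaceMoment_mul_pow hn (ae_restrict_Ioi_nonneg n) hx hh hhx).add h_lin
  rw [show Fim β n x - Fim β n (x - h) = (∫ u in Ioi 0, 1 - exp (-(x * u)) ∂n) -
      (∫ u in Ioi 0, 1 - exp (-((x - h) * u)) ∂n) + β * h by simp only [Fim]; ring]
  refine h_sum.congr_fun fun j => ?_
  rw [neg_one_pow_mul_iteratedDeriv_succ_Fim hn j hx]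
  split_ifs with hj
  · subst hj
    simp only [zero_add, pow_one, Nat.factorial_one, Nat.cast_one, div_one]
    ring
  · simp

theorem oldest_families_distribution (β : ℝ) (n : Measure ℝ)
    (hβ : 0 ≤ β)
    (hn : IntegrableOn (fun u => min 1 u) (Ioi 0) n)
    (hFpos : ∀ z > (0 : ℝ), 0 < Fim β n z)
    (x : ℝ) (hx : 0 < x) :
    (∀ a ∈ Icc (0 : ℝ) 1,
      (∀ k : ℕ, 1 ≤ k →
        0 ≤ (-1 : ℝ) ^ (k + 1) * iteratedDeriv k (Fim β n) x * (a * x) ^ k /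
          (k.factorial : ℝ)) ∧
      HasSum
        (fun k : ℕ => (-1 : ℝ) ^ (k + 2) * iteratedDeriv (k + 1) (Fim β n) x *
          (a * x) ^ (k + 1) / ((k + 1).factorial : ℝ))
        (Fim β n x - Fim β n ((1 - a) * x))) ∧
    (∀ k : ℕ, 1 ≤ k →
      0 ≤ (-1 : ℝ) ^ (k + 1) * x ^ k * iteratedDeriv k (Fim β n) x /
        ((k.factorial : ℝ) * Fim β n x)) ∧
    HasSum
      (fun k : ℕ => (-1 : ℝ) ^ (k + 2) * x ^ (k + 1) *
        iteratedDeriv (k + 1) (Fim β n) x /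
          (((k + 1).factorial : ℝ) * Fim β n x))
      1 := by
  have h_sign (k : ℕ) (hk : 1 ≤ k) : 0 ≤ (-1 : ℝ) ^ (k + 1) * iteratedDeriv k (Fim β n) x := by
    obtain ⟨j, rfl⟩ := Nat.exists_eq_add_of_le' hk
    rw [neg_one_pow_mul_iteratedDeriv_succ_Fim hn j hx]
    have := laplaceMoment_nonneg (ae_restrict_Ioi_nonneg n) (j + 1) x
    split_ifs <;> positivity
  have h_taylor (a : ℝ) (ha : a ∈ Icc (0 : ℝ) 1) : HasSum
      (fun k : ℕ => (-1 : ℝ) ^ (k + 2) * iteratedDeriv (k + 1) (Fim β n) x *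
        (a * x) ^ (k + 1) / ((k + 1).factorial : ℝ))
      (Fim β n x - Fim β n ((1 - a) * x)) := by
    rw [show (1 - a) * x = x - a * x by ring]
    exact hasSum_Fim_sub hn hx (mul_nonneg ha.1 hx.le)
      (mul_le_of_le_one_left hx.le ha.2)
  have h_total := h_taylor 1 ⟨zero_le_one, le_rfl⟩
  rw [sub_self, zero_mul, show Fim β n 0 = 0 by simp [Fim], sub_zero] at h_total
  refine ⟨fun a ha => ⟨fun k hk => ?_, h_taylor a ha⟩, fun k hk => ?_, ?_⟩
  · exact div_nonneg (mul_nonneg (h_sign k hk) (pow_nonneg (mul_nonneg ha.1 hx.le) k))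
      k.factorial.cast_nonneg
  · rw [mul_right_comm]
    exact div_nonneg (mul_nonneg (h_sign k hk) (pow_nonneg hx.le k))
      (mul_nonneg k.factorial.cast_nonneg (hFpos x hx).le)
  · have h_norm := h_total.div_const (Fim β n x)
    rw [div_self (hFpos x hx).ne'] at h_norm
    exact h_norm.congr_fun fun k => by ring
end
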